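/- Let G be a finite soluble group and H a proper subgroup of G. Then: (a) H is 𝔘-subnormal in G if and only if H is ℙ-subnormal in G; and (b) H is 𝔘-abnormal in G if and only if H is ℙ-abnormal in G. -/

import Mathlib

open Subgroup

/-- A finite group is *supersolvable* if it has a chain of subgroups
`⊥ = G_0 ≤ G_1 ≤ ⋯ ≤ G_n = ⊤`, each normal in `G`, with each successive quotient cyclic. -/
def IsSupersolvableGroup (G : Type*) [Group G] : Prop :=
  ∃ (n : ℕ) (c : Fin (n + 1) → Subgroup G) (_ : ∀ i, (c i).Normal),
    Monotone c ∧ c 0 = ⊥ ∧ c (Fin.last n) = ⊤ ∧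
    ∀ i : Fin n,
      IsCyclic (↥(c i.succ) ⧸ ((c i.castSucc).subgroupOf (c i.succ)))

/-- `K` is a maximal subgroup of `L` (both viewed as subgroups of an ambient group). -/
def IsMaximalSubgroupOf {G : Type*} [Group G] (K L : Subgroup G) : Prop :=
  K < L ∧ ∀ X : Subgroup G, K ≤ X → X ≤ L → X = K ∨ X = L

/-- `H` is 𝔘-subnormal in `G`. -/
def USubnormal {G : Type*} [Group G] (H : Subgroup G) : Prop :=
  H ≠ ⊤ ∧ ∃ (n : ℕ) (c : Fin (n + 1) → Subgroup G),
    c 0 = H ∧ c (Fin.last n) = ⊤ ∧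
    ∀ i : Fin n, IsMaximalSubgroupOf (c i.castSucc) (c i.succ) ∧
      IsSupersolvableGroup
        (↥(c i.succ) ⧸ ((c i.castSucc).subgroupOf (c i.succ)).normalCore)

/-- `H` is 𝔘-abnormal in `G`. -/
def UAbnormal {G : Type*} [Group G] (H : Subgroup G) : Prop :=
  ∀ K L : Subgroup G, H ≤ K → IsMaximalSubgroupOf K L →
    ¬ IsSupersolvableGroup (↥L ⧸ (K.subgroupOf L).normalCore)

/-- `G` is an `E_𝔘`-group. -/
def IsEUGroup (G : Type*) [Group G] : Prop :=
  ¬ IsSupersolvableGroup G ∧ ∀ H : Subgroup G, H ≠ ⊥ → USubnormal H ∨ UAbnormal H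

/-- The supersoluble residual `G^𝔘`. -/
def uResidual (G : Type*) [Group G] : Subgroup G :=
  sInf {N : Subgroup G | ∃ h : N.Normal, letI := h; IsSupersolvableGroup (G ⧸ N)}

instance uResidual_normal (G : Type*) [Group G] : (uResidual G).Normal := by
  constructor
  intro n hn g
  rw [uResidual, Subgroup.mem_sInf] at hn ⊢
  rintro N hN
  obtain ⟨h1, h2⟩ := hN
  exact h1.conj_mem n (hn N ⟨h1, h2⟩) g

/-- Hall subgroup. -/
def IsHallSubgroup {G : Type*} [Group G] (H : Subgroup G) : Prop :=
  Nat.Coprime (Nat.card H) H.index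

/-- Gaschütz subgroup. -/
def IsGaschuetzSubgroup {G : Type*} [Group G] (H : Subgroup G) : Prop :=
  IsSupersolvableGroup ↥H ∧
    ∀ K L : Subgroup G, H ≤ K → K ≤ L → ¬ (K.relIndex L).Prime

/-- ℙ-subnormal subgroup. -/
def PSubnormal {G : Type*} [Group G] (H : Subgroup G) : Prop :=
  H ≠ ⊤ ∧ ∃ (n : ℕ) (c : Fin (n + 1) → Subgroup G),
    c 0 = H ∧ c (Fin.last n) = ⊤ ∧
    ∀ i : Fin n, c i.castSucc < c i.succ ∧ ((c i.castSucc).relIndex (c i.succ)).Prime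

/-- ℙ-abnormal subgroup. -/
def PAbnormal {G : Type*} [Group G] (H : Subgroup G) : Prop :=
  ∀ K L : Subgroup G, H ≤ K → K ≤ L → ¬ (K.relIndex L).Prime

/-- A Miller–Moreno group: non-abelian, all proper subgroups abelian. -/
def IsMillerMoreno (X : Type*) [Group X] : Prop :=
  (¬ ∀ a b : X, a * b = b * a) ∧ ∀ H : Subgroup X, H ≠ ⊤ → ∀ a b : ↥H, a * b = b * a

/-- Abelian group of prime power order. -/
def IsAbelianOfPrimePowerOrder (X : Type*) [Group X] : Prop :=
  (∀ a b : X, a * b = b * a) ∧ ∃ p k : ℕ, Nat.Prime p ∧ Nat.card X = p ^ k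

/-- Minimal normal subgroup. -/
def IsMinimalNormalSubgroup {G : Type*} [Group G] (N : Subgroup G) : Prop :=
  N ≠ ⊥ ∧ N.Normal ∧ ∀ X : Subgroup G, X.Normal → X ≠ ⊥ → X ≤ N → X = N

/-- Every chief factor of `G` below `D` is non-cyclic. -/
def ChiefFactorsBelowNoncyclic {G : Type*} [Group G] (D : Subgroup G) : Prop :=
  ∀ (L K : Subgroup G) [L.Normal] [K.Normal], L ≤ K → K ≤ D →
    IsMinimalNormalSubgroup (K.map (QuotientGroup.mk' L)) →
    ¬ IsCyclic ↥(K.map (QuotientGroup.mk' L))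

instance phiIntNormal (G : Type*) [Group G] : (frattini G ⊓ uResidual G).Normal := by
  constructor
  intro n hn g
  rw [Subgroup.mem_inf] at hn ⊢
  exact ⟨(Subgroup.normal_of_characteristic (frattini G)).conj_mem n hn.1 g,
    (uResidual_normal G).conj_mem n hn.2 g⟩

/-- The Fitting subgroup: generated by all nilpotent normal subgroups. -/
def fittingSubgroup (G : Type*) [Group G] : Subgroup G :=
  sSup {N : Subgroup G | N.Normal ∧ Group.IsNilpotent ↥N}

section Helpers

open Subgroup

variable {G : Type*} [Group G]

/-- Maximality in the lattice of subgroups (abstract form). -/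
def IsMax' (K : Subgroup G) : Prop :=
  K ≠ ⊤ ∧ ∀ X : Subgroup G, K ≤ X → X = K ∨ X = ⊤

lemma supersolvable_of_surjective {H : Type*} [Group H] (f : G →* H)
    (hf : Function.Surjective f) : IsSupersolvableGroup G → IsSupersolvableGroup H := by
  rintro ⟨n, c, hnorm, hmono, hbot, htop, hcyc⟩
  refine ⟨n, fun i => (c i).map f, fun i => (hnorm i).map f hf,
    fun i j hij => Subgroup.map_mono (hmono hij),
    (by show (c 0).map f = ⊥; rw [hbot, Subgroup.map_bot]),
    (by show (c (Fin.last n)).map f = ⊤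
        rw [htop, ← f.range_eq_map, f.range_eq_top_of_surjective hf]), fun i => ?_⟩
  haveI : IsCyclic (↥(c i.succ) ⧸ ((c i.castSucc).subgroupOf (c i.succ))) := hcyc i
  haveI : ((c i.castSucc).map f).Normal := (hnorm i.castSucc).map f hf
  haveI : ((c i.succ).map f).Normal := (hnorm i.succ).map f hf
  show IsCyclic (↥((c i.succ).map f) ⧸ ((c i.castSucc).map f).subgroupOf ((c i.succ).map f))
  let φ : ↥(c i.succ) →* ↥((c i.succ).map f) := f.subgroupMap (c i.succ)
  have hφ : Function.Surjective φ := f.subgroupMap_surjective (c i.succ)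
  have hle : (c i.castSucc).subgroupOf (c i.succ) ≤
      (((c i.castSucc).map f).subgroupOf ((c i.succ).map f)).comap φ := by
    intro x hx
    rw [Subgroup.mem_subgroupOf] at hx
    rw [Subgroup.mem_comap, Subgroup.mem_subgroupOf]
    exact Subgroup.mem_map_of_mem f hx
  let ψ := QuotientGroup.map ((c i.castSucc).subgroupOf (c i.succ))
    (((c i.castSucc).map f).subgroupOf ((c i.succ).map f)) φ hle
  have hψ : Function.Surjective ψ := by
    intro y
    obtain ⟨z, rfl⟩ := QuotientGroup.mk'_surjective _ y
    obtain ⟨x, rfl⟩ := hφ z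
    exact ⟨QuotientGroup.mk x, rfl⟩
  exact isCyclic_of_surjective ψ hψ

lemma exists_prime_card_normal [Finite G] (h : IsSupersolvableGroup G)
    (hnt : Nat.card G ≠ 1) : ∃ P : Subgroup G, P.Normal ∧ (Nat.card P).Prime := by
  classical
  obtain ⟨n, c, hnorm, hmono, hbot, htop, hcyc⟩ := h
  have hne : (Finset.univ.filter fun i : Fin (n+1) => c i ≠ ⊥).Nonempty := by
    refine ⟨Fin.last n, ?_⟩
    simp only [Finset.mem_filter, Finset.mem_univ, true_and, htop]
    intro hteq
    refine hnt ?_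
    have hall : ∀ x : G, x = 1 := fun x => by
      have hx : x ∈ (⊥ : Subgroup G) := hteq ▸ Subgroup.mem_top x
      simpa using hx
    exact Nat.card_eq_one_iff_unique.mpr
      ⟨⟨fun a b => by rw [hall a, hall b]⟩, ⟨1⟩⟩
  set i0 := (Finset.univ.filter fun i : Fin (n+1) => c i ≠ ⊥).min' hne with hi0
  have hi0mem := (Finset.univ.filter fun i : Fin (n+1) => c i ≠ ⊥).min'_mem hne
  rw [Finset.mem_filter] at hi0mem
  have hi0ne : c i0 ≠ ⊥ := hi0mem.2
  have hi0pos : i0 ≠ 0 := fun h0 => hi0ne (by rw [h0, hbot])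
  have hjlt : (i0.pred hi0pos).castSucc < i0 := by
    conv_rhs => rw [← Fin.succ_pred i0 hi0pos]
    exact Fin.castSucc_lt_succ
  have hjbot : c ((i0.pred hi0pos).castSucc) = ⊥ := by
    by_contra hne'
    have hmem : (i0.pred hi0pos).castSucc ∈
        (Finset.univ.filter fun i : Fin (n+1) => c i ≠ ⊥) :=
      Finset.mem_filter.mpr ⟨Finset.mem_univ _, hne'⟩
    exact absurd hjlt (not_lt.mpr (Finset.min'_le _ _ hmem))
  haveI hcyc' := hcyc (i0.pred hi0pos)
  have hsub : (c ((i0.pred hi0pos).castSucc)).subgroupOf (c ((i0.pred hi0pos).succ)) = ⊥ := by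
    rw [hjbot, Subgroup.bot_subgroupOf]
  have hCcyc' : IsCyclic ↥(c ((i0.pred hi0pos).succ)) := by
    have e1 := QuotientGroup.quotientMulEquivOfEq hsub
    have e2 := QuotientGroup.quotientBot (G := ↥(c ((i0.pred hi0pos).succ)))
    exact isCyclic_of_surjective (e2.toMonoidHom.comp e1.toMonoidHom)
      (e2.surjective.comp e1.surjective)
  haveI hCcyc : IsCyclic ↥(c i0) := by
    rw [← Fin.succ_pred i0 hi0pos]
    exact hCcyc'
  set C := c i0 with hC
  have hCnorm : C.Normal := hnorm i0
  obtain ⟨p, hp, hdvd⟩ := Nat.exists_prime_and_dvd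
    (fun h1 => hi0ne (Subgroup.card_eq_one.mp h1))
  haveI : Fact p.Prime := ⟨hp⟩
  obtain ⟨x, hx⟩ := exists_prime_orderOf_dvd_card' (G := ↥C) p hdvd
  letI : CommGroup ↥C := IsCyclic.commGroup
  let T : Subgroup ↥C := (powMonoidHom p).ker
  have hmemT : ∀ z : ↥C, z ∈ T ↔ z ^ p = 1 := fun z => Iff.rfl
  have hzT : Subgroup.zpowers x ≤ T := by
    rw [Subgroup.zpowers_le]
    rw [hmemT, ← hx]
    exact pow_orderOf_eq_one x
  haveI : Fintype ↥C := Fintype.ofFinite _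
  have hTcard_le : Nat.card T ≤ p := by
    have h1 : Nat.card T = (Finset.univ.filter fun z : ↥C => z ^ p = 1).card := by
      rw [Nat.card_eq_fintype_card]
      exact Fintype.card_of_subtype _ (fun z => by
        simp only [Finset.mem_filter, Finset.mem_univ, true_and]
        exact (hmemT z).symm)
    rw [h1]
    exact IsCyclic.card_pow_eq_one_le hp.pos
  have hTcard : Nat.card T = p := by
    refine le_antisymm hTcard_le ?_
    calc p = orderOf x := hx.symm
    _ = Nat.card (Subgroup.zpowers x) := (Nat.card_zpowers x).symm
    _ ≤ Nat.card T := Subgroup.card_le_of_le hzT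
  refine ⟨T.map C.subtype, ?_, ?_⟩
  · constructor
    intro y hy g
    obtain ⟨z, hz, rfl⟩ := hy
    rw [SetLike.mem_coe] at hz
    have hgz : g * (z : G) * g⁻¹ ∈ C := hCnorm.conj_mem _ z.2 g
    refine ⟨⟨g * z * g⁻¹, hgz⟩, ?_, rfl⟩
    rw [SetLike.mem_coe, hmemT]
    have hz1 : (z : G) ^ p = 1 := by
      have := (hmemT z).mp hz
      have := congrArg (Subtype.val) this
      rwa [Subgroup.coe_pow] at this
    ext
    rw [Subgroup.coe_pow]
    show (g * (z : G) * g⁻¹) ^ p = 1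
    rw [conj_pow, hz1, mul_one, mul_inv_cancel]
  · rw [Nat.card_congr (Subgroup.equivMapOfInjective T C.subtype C.subtype_injective).toEquiv.symm,
      hTcard]
    exact hp

lemma isMax'_map {H : Type*} [Group H] {f : G →* H} (hf : Function.Surjective f)
    {M : Subgroup G} (hker : f.ker ≤ M) (hmax : IsMax' M) : IsMax' (M.map f) := by
  constructor
  · intro htop
    refine hmax.1 ?_
    have h := congrArg (Subgroup.comap f) htop
    rwa [Subgroup.comap_map_eq, sup_of_le_left hker,
      Subgroup.comap_top, ← top_le_iff, top_le_iff] at h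
  · intro X hX
    rcases hmax.2 (Subgroup.comap f X) (Subgroup.map_le_iff_le_comap.mp hX) with h | h
    · left
      rw [← Subgroup.map_comap_eq_self_of_surjective hf X, h]
    · right
      rw [← Subgroup.map_comap_eq_self_of_surjective hf X, h, ← MonoidHom.range_eq_map,
        f.range_eq_top_of_surjective hf]

lemma index_eq_relIndex_inf [Finite G] {M P : Subgroup G} [P.Normal] (hsup : M ⊔ P = ⊤) :
    M.index = (M ⊓ P).relIndex P := by
  have h1 : (M ⊓ P).relIndex M * M.index = (M ⊓ P).index :=
    Subgroup.relIndex_mul_index inf_le_left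
  have h2 : (M ⊓ P).relIndex P * P.index = (M ⊓ P).index :=
    Subgroup.relIndex_mul_index inf_le_right
  have h3 : (M ⊓ P).relIndex M = P.index := by
    rw [Subgroup.inf_relIndex_left, ← Subgroup.relIndex_sup_right (H := M) (K := P), hsup,
      Subgroup.relIndex_top_right]
  rw [h3] at h1
  have hpos : 0 < P.index := Nat.pos_of_ne_zero Subgroup.index_ne_zero_of_finite
  have := h1.trans h2.symm
  rw [mul_comm ((M ⊓ P).relIndex P) P.index] at this
  exact Nat.eq_of_mul_eq_mul_left hpos this

lemma aux_B : ∀ (N : ℕ) (G : Type*) [Group G] [Finite G], Nat.card G ≤ N →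
    IsSupersolvableGroup G → ∀ M : Subgroup G, IsMax' M → M.index.Prime := by
  intro N
  induction N with
  | zero =>
    intro G _ _ hcard
    have : Nat.card G ≠ 0 := Nat.card_pos.ne'
    omega
  | succ N ih =>
    intro G _ _ hcard hss M hmax
    have hnt : Nat.card G ≠ 1 := by
      intro h1
      haveI : Subsingleton G := (Nat.card_eq_one_iff_unique.mp h1).1
      refine hmax.1 (Subgroup.ext fun x => ?_)
      simp only [Subgroup.mem_top, iff_true]
      rw [Subsingleton.elim x 1]
      exact M.one_mem
    obtain ⟨P, hPn, hPp⟩ := exists_prime_card_normal hss hnt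
    haveI := hPn
    by_cases hPM : P ≤ M
    · have hker : (QuotientGroup.mk' P).ker ≤ M := by
        rw [QuotientGroup.ker_mk']; exact hPM
      have hcardlt : Nat.card (G ⧸ P) ≤ N := by
        have h2 : Nat.card P * P.index = Nat.card G := Subgroup.card_mul_index P
        have h3 : P.index = Nat.card (G ⧸ P) := Subgroup.index_eq_card P
        have h4 : 2 ≤ Nat.card P := hPp.two_le
        have h5 : 0 < Nat.card (G ⧸ P) := Nat.card_pos
        nlinarith
      have hres := ih (G ⧸ P) hcardlt
        (supersolvable_of_surjective _ (QuotientGroup.mk'_surjective P) hss)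
        (M.map (QuotientGroup.mk' P))
        (isMax'_map (QuotientGroup.mk'_surjective P) hker hmax)
      rwa [Subgroup.index_map_eq M (QuotientGroup.mk'_surjective P) hker] at hres
    · have hsup : M ⊔ P = ⊤ :=
        (hmax.2 (M ⊔ P) le_sup_left).resolve_left
          (fun h => hPM (le_sup_right.trans h.le))
      have hidx := index_eq_relIndex_inf hsup
      have hMP : M ⊓ P = ⊥ := by
        have hdvd : Nat.card (M ⊓ P : Subgroup G) ∣ Nat.card P :=
          Subgroup.card_dvd_of_le inf_le_right
        rcases hPp.eq_one_or_self_of_dvd _ hdvd with h1 | h1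
        · exact Subgroup.card_eq_one.mp h1
        · exfalso
          refine hPM ?_
          have : M ⊓ P = P := Subgroup.eq_of_le_of_card_ge inf_le_right (le_of_eq h1.symm)
          exact this ▸ inf_le_left
      rw [hidx, hMP, Subgroup.relIndex_bot_left]
      exact hPp

lemma index_prime_of_supersolvable_maximal [Finite G] (h : IsSupersolvableGroup G)
    {M : Subgroup G} (hmax : IsMax' M) : M.index.Prime :=
  aux_B (Nat.card G) G le_rfl h M hmax

lemma exists_minimal_normal [Finite G] (hnt : Nontrivial G) :
    ∃ N : Subgroup G, N.Normal ∧ N ≠ ⊥ ∧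
      ∀ X : Subgroup G, X.Normal → X ≠ ⊥ → X ≤ N → X = N := by
  have hwf : WellFoundedLT (Subgroup G) := Finite.to_wellFoundedLT
  obtain ⟨N, ⟨hN1, hN2⟩, hmin⟩ := hwf.wf.has_min
    {X : Subgroup G | X.Normal ∧ X ≠ ⊥} ⟨⊤, ⟨inferInstance, bot_lt_top.ne'⟩⟩
  refine ⟨N, hN1, hN2, fun X hX1 hX2 hX3 => ?_⟩
  by_contra hne'
  exact hmin X ⟨hX1, hX2⟩ (lt_of_le_of_ne hX3 hne')

lemma minimal_normal_abelian [Group.IsSolvable G] {N : Subgroup G} (hN : N.Normal) (hne : N ≠ ⊥)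
    (hmin : ∀ X : Subgroup G, X.Normal → X ≠ ⊥ → X ≤ N → X = N) :
    ∀ a ∈ N, ∀ b ∈ N, a * b = b * a := by
  haveI := hN
  have hle : ⁅N, N⁆ ≤ N := Subgroup.commutator_le_left N N
  have hcomm : ⁅N, N⁆ = ⊥ := by
    by_contra hne2
    have heq : ⁅N, N⁆ = N := hmin _ (Subgroup.commutator_normal N N) hne2 hle
    have hstep : ∀ k, N ≤ derivedSeries G k := by
      intro k
      induction k with
      | zero => rw [derivedSeries_zero]; exact le_top
      | succ k ihk =>
        calc N = ⁅N, N⁆ := heq.symm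
        _ ≤ ⁅derivedSeries G k, derivedSeries G k⁆ := Subgroup.commutator_mono ihk ihk
        _ = derivedSeries G (k+1) := (derivedSeries_succ G k).symm
    obtain ⟨m, hm⟩ := (inferInstance : Group.IsSolvable G)
    exact hne (le_antisymm (hm ▸ hstep m) bot_le)
  have hcen : N ≤ Subgroup.centralizer (N : Set G) :=
    Subgroup.commutator_eq_bot_iff_le_centralizer.mp hcomm
  intro a ha b hb
  exact Subgroup.mem_centralizer_iff.mp (hcen hb) a ha

lemma isCyclic_mulAut_of_prime_card {A : Type*} [Group A] [Finite A] {p : ℕ} [hfp : Fact p.Prime]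
    (h : Nat.card A = p) : IsCyclic (MulAut A) := by
  haveI : IsCyclic A := isCyclic_of_prime_card h
  haveI : Fact (Nat.card A).Prime := h ▸ hfp
  let e1 : MulAut (Multiplicative (ZMod (Nat.card A))) ≃* MulAut A :=
    MulAut.congr (zmodCyclicMulEquiv inferInstance)
  let e3 := (MulAutMultiplicative (ZMod (Nat.card A))).symm
  let e4 := (ZMod.AddAutEquivUnits (Nat.card A)).toMultiplicative.symm
  refine isCyclic_of_surjective (e1.toMonoidHom.comp (e3.toMonoidHom.comp e4.toMonoidHom)) ?_
  rw [MonoidHom.coe_comp, MonoidHom.coe_comp]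
  exact e1.surjective.comp (e3.surjective.comp e4.surjective)

lemma maximal_of_index_prime [Finite G] {K : Subgroup G} (hp : K.index.Prime) : IsMax' K := by
  constructor
  · intro h
    rw [h, Subgroup.index_top] at hp
    exact hp.one_lt.ne' rfl
  · intro X hX
    have hmul : K.relIndex X * X.index = K.index := Subgroup.relIndex_mul_index hX
    rcases hp.eq_one_or_self_of_dvd X.index
        ⟨K.relIndex X, by rw [mul_comm]; exact hmul.symm⟩ with h | h
    · right; exact Subgroup.index_eq_one.mp h
    · left
      have h1 : K.relIndex X = 1 := by
        have h2 := hmul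
        rw [h] at h2
        exact Nat.eq_of_mul_eq_mul_right hp.pos (by rw [h2, one_mul])
      exact le_antisymm (Subgroup.relIndex_eq_one.mp h1) hX

lemma supersolvable_of_primitive [Finite G] [Group.IsSolvable G] {K : Subgroup G}
    (hcore : K.normalCore = ⊥) (hp : K.index.Prime) : IsSupersolvableGroup G := by
  have hmax : IsMax' K := maximal_of_index_prime hp
  haveI hnt : Nontrivial G := by
    rcases subsingleton_or_nontrivial G with hs | hnt
    · exact absurd (Subsingleton.elim K ⊤) hmax.1
    · exact hnt
  obtain ⟨N₁, hN₁n, hN₁ne, hN₁min⟩ := exists_minimal_normal hnt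
  haveI := hN₁n
  have hab := minimal_normal_abelian hN₁n hN₁ne hN₁min
  have hnle : ¬ N₁ ≤ K := fun hle =>
    hN₁ne (le_bot_iff.mp (hcore ▸ Subgroup.normal_le_normalCore.mpr hle))
  have hsup : N₁ ⊔ K = ⊤ :=
    (hmax.2 (N₁ ⊔ K) le_sup_right).resolve_left fun h => hnle (le_sup_left.trans h.le)
  have hnormalizer : ∀ D : Subgroup G, (∀ g, g ∈ N₁ → ∀ h, h ∈ D ↔ g * h * g⁻¹ ∈ D) →
      (∀ g, g ∈ K → ∀ h, h ∈ D ↔ g * h * g⁻¹ ∈ D) → D.Normal := by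
    intro D h1 h2
    rw [← Subgroup.normalizer_eq_top_iff, ← top_le_iff, ← hsup, sup_le_iff]
    exact ⟨fun g hg => Subgroup.mem_normalizer_iff.mpr (h1 g hg),
      fun g hg => Subgroup.mem_normalizer_iff.mpr (h2 g hg)⟩
  -- conjugation by elements of K preserves any D of the form A ⊓ K with A normal
  have hKside : ∀ (A : Subgroup G), A.Normal → ∀ g, g ∈ K → ∀ h, h ∈ A ⊓ K ↔ g * h * g⁻¹ ∈ A ⊓ K := by
    intro A hA g hg h
    constructor
    · intro hh
      rw [Subgroup.mem_inf] at hh ⊢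
      exact ⟨hA.conj_mem h hh.1 g, K.mul_mem (K.mul_mem hg hh.2) (K.inv_mem hg)⟩
    · intro hh
      rw [Subgroup.mem_inf] at hh ⊢
      have e : h = g⁻¹ * (g * h * g⁻¹) * g := by group
      constructor
      · rw [e]
        have := hA.conj_mem _ hh.1 g⁻¹
        simpa using this
      · rw [e]
        exact K.mul_mem (K.mul_mem (K.inv_mem hg) hh.2) hg
  -- N₁ ⊓ K = ⊥
  have hDbot : N₁ ⊓ K = ⊥ := by
    have hkey : ∀ g, g ∈ N₁ → ∀ h, h ∈ N₁ → g * h * g⁻¹ = h := by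
      intro g hg h hh
      calc g * h * g⁻¹ = h * g * g⁻¹ := by rw [hab g hg h hh]
      _ = h := by group
    have hDnorm : (N₁ ⊓ K).Normal := by
      refine hnormalizer _ ?_ (hKside N₁ hN₁n)
      intro g hg h
      constructor
      · intro hh
        rw [hkey g hg h (Subgroup.mem_inf.mp hh).1]
        exact hh
      · intro hh
        have h1' : g * h * g⁻¹ ∈ N₁ := (Subgroup.mem_inf.mp hh).1
        have hhN : h ∈ N₁ := by
          have e : h = g⁻¹ * (g * h * g⁻¹) * g := by group
          rw [e]
          have := hN₁n.conj_mem _ h1' g⁻¹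
          simpa using this
        rwa [hkey g hg h hhN] at hh
    haveI := hDnorm
    exact le_bot_iff.mp (hcore ▸ Subgroup.normal_le_normalCore.mpr inf_le_right)
  have hKsup : K ⊔ N₁ = ⊤ := by rw [sup_comm]; exact hsup
  have h1 : K.index = (K ⊓ N₁).relIndex N₁ := index_eq_relIndex_inf hKsup
  rw [show K ⊓ N₁ = ⊥ by rw [inf_comm]; exact hDbot, Subgroup.relIndex_bot_left] at h1
  haveI : Fact K.index.Prime := ⟨hp⟩
  have hcardN₁ : Nat.card N₁ = K.index := h1.symm
  haveI hN₁cyc : IsCyclic ↥N₁ := isCyclic_of_prime_card hcardN₁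
  set C := Subgroup.centralizer (N₁ : Set G) with hCdef
  have hCnorm : C.Normal := by
    constructor
    intro x hx g
    rw [hCdef, Subgroup.mem_centralizer_iff] at hx ⊢
    intro h hh
    have hh' : g⁻¹ * h * g ∈ N₁ := by
      have := hN₁n.conj_mem h hh g⁻¹
      simpa using this
    have hx' := hx _ hh'
    calc h * (g * x * g⁻¹) = g * ((g⁻¹ * h * g) * x) * g⁻¹ := by group
    _ = g * (x * (g⁻¹ * h * g)) * g⁻¹ := by rw [hx']
    _ = g * x * g⁻¹ * h := by group
  have hN₁C : N₁ ≤ C := by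
    intro a ha
    rw [hCdef, Subgroup.mem_centralizer_iff]
    intro h hh
    exact hab h hh a ha
  have hCK : C ⊓ K = ⊥ := by
    have hCnormal : (C ⊓ K).Normal := by
      refine hnormalizer _ ?_ (hKside C hCnorm)
      intro g hg h
      have hkeyC : ∀ x, x ∈ C → g * x * g⁻¹ = x := by
        intro x hx
        have := Subgroup.mem_centralizer_iff.mp hx g hg
        calc g * x * g⁻¹ = x * g * g⁻¹ := by rw [← this]
        _ = x := by group
      constructor
      · intro hh
        rw [hkeyC h (Subgroup.mem_inf.mp hh).1]
        exact hh
      · intro hh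
        have h1' : g * h * g⁻¹ ∈ C := (Subgroup.mem_inf.mp hh).1
        have e : h = g⁻¹ * (g * h * g⁻¹) * g := by group
        have hkeyC' : ∀ x, x ∈ C → g⁻¹ * x * g = x := by
          intro x hx
          have hxc := Subgroup.mem_centralizer_iff.mp hx g⁻¹ (N₁.inv_mem hg)
          calc g⁻¹ * x * g = x * g⁻¹ * g := by rw [← hxc]
          _ = x := by group
        rw [e, hkeyC' _ h1']
        exact hh
    haveI := hCnormal
    exact le_bot_iff.mp (hcore ▸ Subgroup.normal_le_normalCore.mpr inf_le_right)
  have hCsup : K ⊔ C = ⊤ := by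
    rw [← top_le_iff, ← hsup]
    exact sup_le (hN₁C.trans le_sup_right) le_sup_left
  haveI := hCnorm
  have h2 : K.index = (K ⊓ C).relIndex C := index_eq_relIndex_inf hCsup
  rw [show K ⊓ C = ⊥ by rw [inf_comm]; exact hCK, Subgroup.relIndex_bot_left] at h2
  have hCeq : N₁ = C := Subgroup.eq_of_le_of_card_ge hN₁C (by rw [← h2, hcardN₁])
  -- G ⧸ N₁ is cyclic
  have hker : (MulAut.conjNormal : G →* MulAut ↥N₁).ker = C := by
    ext g
    rw [MonoidHom.mem_ker, hCdef, Subgroup.mem_centralizer_iff]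
    constructor
    · intro hg h hh
      have h1' := congrArg Subtype.val (DFunLike.congr_fun hg (⟨h, hh⟩ : ↥N₁))
      rw [MulAut.conjNormal_apply] at h1'
      simp only [MulAut.one_apply] at h1'
      calc h * g = (g * h * g⁻¹) * g := by rw [h1']
      _ = g * h := by group
    · intro hcomm
      have hgoal : ∀ h : ↥N₁, (MulAut.conjNormal g : MulAut ↥N₁) h = h := by
        intro h
        refine Subtype.ext ?_
        rw [MulAut.conjNormal_apply]
        have hc := hcomm (h : G) h.2
        calc g * (h : G) * g⁻¹ = ((h : G) * g) * g⁻¹ := by rw [← hc]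
        _ = h := by group
      exact MulEquiv.ext hgoal
  haveI : IsCyclic (MulAut ↥N₁) := isCyclic_mulAut_of_prime_card hcardN₁
  have hQcyc : IsCyclic (G ⧸ N₁) := by
    have heq : N₁ = (MulAut.conjNormal : G →* MulAut ↥N₁).ker := by rw [hker, hCeq]
    have e : (G ⧸ N₁) ≃* (G ⧸ (MulAut.conjNormal : G →* MulAut ↥N₁).ker) :=
      QuotientGroup.quotientMulEquivOfEq heq
    have e2 := QuotientGroup.quotientKerEquivRange (MulAut.conjNormal : G →* MulAut ↥N₁)
    have e3 := (e.trans e2).symm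
    exact isCyclic_of_surjective e3.toMonoidHom e3.surjective
  -- Build the chain ⊥ ≤ N₁ ≤ ⊤
  refine ⟨2, ![⊥, N₁, ⊤], fun i => ?_, ?_, ?_, ?_, fun i => ?_⟩
  · fin_cases i
    · show (⊥ : Subgroup G).Normal
      infer_instance
    · show N₁.Normal
      exact hN₁n
    · show (⊤ : Subgroup G).Normal
      infer_instance
  · rw [Fin.monotone_iff_le_succ]
    intro i
    fin_cases i
    · show (⊥ : Subgroup G) ≤ N₁
      exact bot_le
    · show N₁ ≤ ⊤
      exact le_top
  · rfl
  · rfl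
  · fin_cases i
    · show IsCyclic (↥N₁ ⧸ (⊥ : Subgroup G).subgroupOf N₁)
      exact isCyclic_of_surjective
        (QuotientGroup.mk' ((⊥ : Subgroup G).subgroupOf N₁))
        (QuotientGroup.mk'_surjective _)
    · show IsCyclic (↥(⊤ : Subgroup G) ⧸ N₁.subgroupOf ⊤)
      have hle : N₁ ≤ Subgroup.comap (Subgroup.topEquiv (G := G)).symm.toMonoidHom
          (N₁.subgroupOf ⊤) := by
        intro x hx
        rw [Subgroup.mem_comap, Subgroup.mem_subgroupOf]
        exact hx
      let ψ := QuotientGroup.map N₁ (N₁.subgroupOf ⊤)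
        (Subgroup.topEquiv (G := G)).symm.toMonoidHom hle
      have hψ : Function.Surjective ψ := by
        intro y
        obtain ⟨z, rfl⟩ := QuotientGroup.mk'_surjective _ y
        obtain ⟨x, rfl⟩ := (Subgroup.topEquiv (G := G)).symm.surjective z
        exact ⟨QuotientGroup.mk x, rfl⟩
      exact isCyclic_of_surjective ψ hψ

lemma keyAbstract [Finite G] [Group.IsSolvable G] {K : Subgroup G} (hmax : IsMax' K) :
    IsSupersolvableGroup (G ⧸ K.normalCore) ↔ K.index.Prime := by
  have hker : (QuotientGroup.mk' K.normalCore).ker ≤ K := by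
    rw [QuotientGroup.ker_mk']; exact K.normalCore_le
  have hidx : (K.map (QuotientGroup.mk' K.normalCore)).index = K.index :=
    Subgroup.index_map_eq K (QuotientGroup.mk'_surjective _) hker
  constructor
  · intro hss
    rw [← hidx]
    exact index_prime_of_supersolvable_maximal hss
      (isMax'_map (QuotientGroup.mk'_surjective _) hker hmax)
  · intro hp
    have hsur := QuotientGroup.mk'_surjective K.normalCore
    have hcore : (K.map (QuotientGroup.mk' K.normalCore)).normalCore = ⊥ := by
      have h1 : Subgroup.comap (QuotientGroup.mk' K.normalCore)
          ((K.map (QuotientGroup.mk' K.normalCore)).normalCore) ≤ K.normalCore := by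
        haveI : (Subgroup.comap (QuotientGroup.mk' K.normalCore)
            ((K.map (QuotientGroup.mk' K.normalCore)).normalCore)).Normal :=
          Subgroup.Normal.comap
            (Subgroup.normalCore_normal (K.map (QuotientGroup.mk' K.normalCore)))
            (QuotientGroup.mk' K.normalCore)
        have h2 : Subgroup.comap (QuotientGroup.mk' K.normalCore)
            (K.map (QuotientGroup.mk' K.normalCore)) = K := by
          rw [Subgroup.comap_map_eq, QuotientGroup.ker_mk', sup_of_le_left K.normalCore_le]
        exact Subgroup.normal_le_normalCore.mpr
          (le_trans (Subgroup.comap_mono (Subgroup.normalCore_le _)) (le_of_eq h2))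
      rw [← Subgroup.map_comap_eq_self_of_surjective hsur
        ((K.map (QuotientGroup.mk' K.normalCore)).normalCore)]
      refine le_bot_iff.mp (le_trans (Subgroup.map_mono h1) ?_)
      exact le_of_eq ((Subgroup.map_eq_bot_iff _).mpr (le_of_eq (QuotientGroup.ker_mk' _).symm))
    exact supersolvable_of_primitive hcore (by rw [hidx]; exact hp)

lemma isMaximalSubgroupOf_iff {K L : Subgroup G} (hKL : K ≤ L) :
    IsMaximalSubgroupOf K L ↔ IsMax' (K.subgroupOf L) := by
  constructor
  · rintro ⟨hlt, hmax⟩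
    constructor
    · intro htop
      exact hlt.ne (le_antisymm hKL (Subgroup.subgroupOf_eq_top.mp htop))
    · intro X' hX'
      have h1 : (K.subgroupOf L).map L.subtype = K := by
        rw [Subgroup.subgroupOf_map_subtype, inf_of_le_left hKL]
      have h2 : K ≤ X'.map L.subtype := h1 ▸ Subgroup.map_mono hX'
      rcases hmax (X'.map L.subtype) h2 (Subgroup.map_subtype_le X') with h | h
      · left
        apply Subgroup.map_injective L.subtype_injective
        rw [h, h1]
      · right
        apply Subgroup.map_injective L.subtype_injective
        rw [h, ← MonoidHom.range_eq_map]
        exact L.range_subtype.symm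
  · rintro ⟨hne, hmax'⟩
    constructor
    · refine lt_of_le_of_ne hKL (fun h => hne ?_)
      rw [h]
      exact Subgroup.subgroupOf_self L
    · intro X hKX hXL
      rcases hmax' (X.subgroupOf L) (by
        intro x hx
        rw [Subgroup.mem_subgroupOf] at hx ⊢
        exact hKX hx) with h | h
      · left
        have h3 := congrArg (Subgroup.map L.subtype) h
        rwa [Subgroup.subgroupOf_map_subtype, Subgroup.subgroupOf_map_subtype,
          inf_of_le_left hXL, inf_of_le_left hKL] at h3
      · right
        exact le_antisymm hXL (Subgroup.subgroupOf_eq_top.mp h)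

lemma maximal_of_relIndex_prime [Finite G] {K L : Subgroup G} (hKL : K ≤ L)
    (hp : (K.relIndex L).Prime) : IsMaximalSubgroupOf K L :=
  (isMaximalSubgroupOf_iff hKL).mpr (maximal_of_index_prime hp)

lemma keyLemma [Finite G] (hsol : IsSolvable G) {K L : Subgroup G}
    (hm : IsMaximalSubgroupOf K L) :
    IsSupersolvableGroup (↥L ⧸ (K.subgroupOf L).normalCore) ↔ (K.relIndex L).Prime := by
  haveI : Group.IsSolvable G := hsol
  exact keyAbstract ((isMaximalSubgroupOf_iff hm.1.le).mp hm)

end Helpers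

theorem statement_18 {G : Type*} [Group G] [Finite G] (hsol : IsSolvable G)
    (H : Subgroup G) (hH : H ≠ ⊤) :
    (USubnormal H ↔ PSubnormal H) ∧ (UAbnormal H ↔ PAbnormal H) := by
  constructor
  · constructor
    · rintro ⟨-, n, c, hc0, hcl, hstep⟩
      refine ⟨hH, n, c, hc0, hcl, fun i => ?_⟩
      obtain ⟨hm, hss⟩ := hstep i
      exact ⟨hm.1, (keyLemma hsol hm).mp hss⟩
    · rintro ⟨-, n, c, hc0, hcl, hstep⟩
      refine ⟨hH, n, c, hc0, hcl, fun i => ?_⟩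
      obtain ⟨hlt, hp⟩ := hstep i
      have hm := maximal_of_relIndex_prime hlt.le hp
      exact ⟨hm, (keyLemma hsol hm).mpr hp⟩
  · constructor
    · intro hU K L hK hle hp
      have hm := maximal_of_relIndex_prime hle hp
      exact hU K L hK hm ((keyLemma hsol hm).mpr hp)
    · intro hP K L hK hm hss
      exact hP K L hK hm.1.le ((keyLemma hsol hm).mp hss)
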